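/- Let G be a finite connected simple graph, let v_c be a vertex with ecc_G(v_c) = rad(G) (a center of G), and let T be a spanning tree of G such that d_T(v_c, v) = d_G(v_c, v) for every vertex v (a breadth-first tree rooted at v_c). Then rad(T) = rad(G); i.e., the breadth-first tree rooted at a center of G has the same radius (minimum graph eccentricity) as G. (This is the equality ε(I) = ε(G) in the paper's supplemental lemma.) -/

import Mathlib

open Finset

/-- The eccentricity of a vertex `v` in a finite graph `G`. -/
noncomputable def ecc {V : Type*} [Fintype V] (G : SimpleGraph V) (v : V) : ℕ :=
  Finset.univ.sup (fun u => G.dist v u)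

/-- The radius of a finite graph `G` on a nonempty vertex set. -/
noncomputable def rad {V : Type*} [Fintype V] [Nonempty V] (G : SimpleGraph V) : ℕ :=
  Finset.univ.inf' Finset.univ_nonempty (fun v => ecc G v)

/-!
Passing to a connected spanning subgraph can only lengthen distances, so `rad G ≤ rad T`.
Conversely, a breadth-first tree rooted at `v_c` keeps every distance from `v_c`, hence
`ecc T v_c = ecc G v_c = rad G`, which bounds `rad T` from above.
-/

section

variable {V : Type*} [Fintype V]

lemma ecc_congr {G H : SimpleGraph V} {v : V} (h : ∀ u, H.dist v u = G.dist v u) :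
    ecc H v = ecc G v :=
  Finset.sup_congr rfl fun u _ => h u

lemma ecc_le_ecc_of_le {G H : SimpleGraph V} (hle : H ≤ G) (hH : H.Connected) (v : V) :
    ecc G v ≤ ecc H v :=
  Finset.sup_mono_fun fun u _ => (hH v u).dist_anti hle

variable [Nonempty V]

lemma rad_le_ecc (G : SimpleGraph V) (v : V) : rad G ≤ ecc G v :=
  Finset.inf'_le _ (Finset.mem_univ v)

lemma rad_le_rad_of_le {G H : SimpleGraph V} (hle : H ≤ G) (hH : H.Connected) :
    rad G ≤ rad H :=
  Finset.le_inf' _ _ fun v _ => (rad_le_ecc G v).trans (ecc_le_ecc_of_le hle hH v)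

end

theorem rad_bfs_tree_eq_rad_general {V : Type*} [Fintype V] [Nonempty V]
    (G T : SimpleGraph V) (hle : T ≤ G) (hT : T.IsTree) (v_c : V)
    (hcenter : ecc G v_c = rad G)
    (hdist : ∀ v : V, T.dist v_c v = G.dist v_c v) :
    rad T = rad G := by
  apply le_antisymm
  · calc rad T ≤ ecc T v_c := rad_le_ecc T v_c
      _ = ecc G v_c := ecc_congr hdist
      _ = rad G := hcenter
  · exact rad_le_rad_of_le hle hT.connected

/-- If `v_c` is a center of a finite connected simple graph `G` (a vertex of
minimum eccentricity) and `T` is a spanning tree of `G` preserving all distances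
from `v_c` (a breadth-first tree rooted at `v_c`), then `rad T = rad G`. -/
theorem rad_bfs_tree_eq_rad {V : Type*} [Fintype V] [Nonempty V]
    (G T : SimpleGraph V) (hG : G.Connected) (hle : T ≤ G) (hT : T.IsTree) (v_c : V)
    (hcenter : ecc G v_c = rad G)
    (hdist : ∀ v : V, T.dist v_c v = G.dist v_c v) :
    rad T = rad G :=
  rad_bfs_tree_eq_rad_general G T hle hT v_c hcenter hdist
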